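/- arXiv:1512.09364 — 5 statements merged into one kernel-verified Lean document; each statement's English description precedes it below -/
import Mathlib

section
/- Let ζ < 0 and let Y be a real random variable with density ν(x) = a₋ e^{-x²/2} for x ≤ -ζ and ν(x) = a₊ e^{-|ζ| x} for x ≥ -ζ (continuous, normalized). Then E[ Y² 1{Y < -ζ} ] + |ζ| · E[ Y 1{Y ≥ -ζ} ] ≤ 1; in particular E[ Y 1{Y ≥ -ζ} ] ≤ 1/|ζ| and E[ |Y| 1{Y < -ζ} ] ≤ 1. -/
/-!
Write `c = -ζ > 0`. The Lyapunov identity `∫ b(x) x ν(x) dx = -1` for `V(x) = x²` splits into one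
integration-by-parts identity for each piece of the density:
`∫_{y<c} y² e^{-y²/2} = ∫_{y<c} e^{-y²/2} - c e^{-c²/2}` and
`c ∫_{y>c} y e^{-cy} = c e^{-c²} + ∫_{y>c} e^{-cy}`.
Weighted by `a₋` and `a₊` and added, the boundary terms cancel by continuity of the density at `c`,
so the first inequality is an equality by normalisation. The second bound follows by dropping the
nonnegative Gaussian term, the third from `|y| ≤ (y² + 1) / 2`.
-/

open MeasureTheory Real Filter Set Topology

lemma integrable_exp_neg_sq_div_two : Integrable fun y : ℝ => exp (-y ^ 2 / 2) := by
  refine (integrable_exp_neg_mul_sq (b := 1 / 2) (by norm_num)).congr (.of_forall fun y => ?_)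
  simp only; ring_nf

lemma integrable_sq_mul_exp_neg_sq_div_two :
    Integrable fun y : ℝ => y ^ 2 * exp (-y ^ 2 / 2) := by
  refine (integrable_rpow_mul_exp_neg_mul_sq (b := 1 / 2) (by norm_num) (s := 2)
    (by norm_num)).congr (.of_forall fun y => ?_)
  simp only [rpow_two]; ring_nf

lemma hasDerivAt_mul_exp_neg_sq_div_two (y : ℝ) :
    HasDerivAt (fun y => y * exp (-y ^ 2 / 2)) (exp (-y ^ 2 / 2) - y ^ 2 * exp (-y ^ 2 / 2)) y := by
  refine ((hasDerivAt_id y).mul ((hasDerivAt_pow 2 y).neg.div_const 2).exp).congr_deriv ?_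
  simp only [id_eq, Pi.neg_apply]; ring

lemma tendsto_mul_exp_neg_sq_div_two_atBot :
    Tendsto (fun y : ℝ => y * exp (-y ^ 2 / 2)) atBot (𝓝 0) := by
  have h := (tendsto_rpow_abs_mul_exp_neg_mul_sq_cocompact (a := 1 / 2) (by norm_num) 1).mono_left
    atBot_le_cocompact
  refine (tendsto_zero_iff_abs_tendsto_zero _).mpr (h.congr fun y => ?_)
  simp only [Function.comp_apply, rpow_one, abs_mul, abs_of_pos (exp_pos _)]; ring_nf

theorem integral_Iic_sq_mul_exp_neg_sq_div_two (c : ℝ) :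
    ∫ y in Iic c, y ^ 2 * exp (-y ^ 2 / 2) =
      (∫ y in Iic c, exp (-y ^ 2 / 2)) - c * exp (-c ^ 2 / 2) := by
  have h := integral_Iic_of_hasDerivAt_of_tendsto' (a := c)
    (fun y _ => hasDerivAt_mul_exp_neg_sq_div_two y)
    (integrable_exp_neg_sq_div_two.sub integrable_sq_mul_exp_neg_sq_div_two).integrableOn
    tendsto_mul_exp_neg_sq_div_two_atBot
  rw [integral_sub integrable_exp_neg_sq_div_two.integrableOn
    integrable_sq_mul_exp_neg_sq_div_two.integrableOn] at h
  linarith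

lemma integral_Ioi_exp_neg_mul {l : ℝ} (hl : 0 < l) (c : ℝ) :
    ∫ y in Ioi c, exp (-l * y) = exp (-l * c) / l := by
  rw [integral_exp_mul_Ioi (by linarith), neg_div_neg_eq]

theorem mul_integral_Ioi_mul_exp_neg_mul {l c : ℝ} (hl : 0 < l) (hc : 0 ≤ c) :
    l * ∫ y in Ioi c, y * exp (-l * y) = c * exp (-l * c) + ∫ y in Ioi c, exp (-l * y) := by
  have hderiv : ∀ y ∈ Ici c, HasDerivAt (fun y => -(y + 1 / l) * exp (-l * y))
      (l * (y * exp (-l * y))) y := by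
    intro y _
    refine (((hasDerivAt_id y).add_const (1 / l)).neg.mul
      ((hasDerivAt_id y).const_mul (-l)).exp).congr_deriv ?_
    simp only [id_eq, Pi.neg_apply]; field_simp; ring
  have hlim : Tendsto (fun y => -(y + 1 / l) * exp (-l * y)) atTop (𝓝 0) := by
    have hmoment := tendsto_rpow_mul_exp_neg_mul_atTop_nhds_zero 1 l hl
    have hexp := tendsto_exp_atBot.comp (tendsto_id.const_mul_atTop_of_neg (neg_neg_of_pos hl))
    simpa [add_mul] using (hmoment.add (hexp.const_mul (1 / l))).neg
  have h := integral_Ioi_of_hasDerivAt_of_nonneg' hderiv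
    (fun y hy => by have : 0 < y := hc.trans_lt hy; positivity) hlim
  rw [integral_const_mul] at h
  rw [h, integral_Ioi_exp_neg_mul hl]
  field_simp; ring

lemma integral_abs_mul_le_half {μ : Measure ℝ} {f : ℝ → ℝ} (hf : 0 ≤ᵐ[μ] f)
    (hf_int : Integrable f μ) (hf_sq : Integrable (fun y => y ^ 2 * f y) μ) :
    ∫ y, |y| * f y ∂μ ≤ ((∫ y, y ^ 2 * f y ∂μ) + ∫ y, f y ∂μ) / 2 := by
  rw [← integral_add hf_sq hf_int, ← integral_div]
  refine integral_mono_of_nonneg (hf.mono fun y hy => mul_nonneg (abs_nonneg y) hy)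
    ((hf_sq.add hf_int).div_const 2) (hf.mono fun y hy => ?_)
  have : 2 * |y| ≤ y ^ 2 + 1 := by nlinarith [sq_nonneg (|y| - 1), sq_abs y]
  simp only [Pi.zero_apply] at hy
  nlinarith [mul_le_mul_of_nonneg_right this hy]

lemma gaussian_sq_moment_add_exp_moment_eq_one {c am ap : ℝ} (hc : 0 < c)
    (hcont : am * exp (-c ^ 2 / 2) = ap * exp (-c ^ 2))
    (hnorm : am * (∫ y in Iic c, exp (-y ^ 2 / 2)) + ap * (∫ y in Ioi c, exp (-c * y)) = 1) :
    (∫ y in Iio c, y ^ 2 * (am * exp (-y ^ 2 / 2))) +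
      c * (∫ y in Ici c, y * (ap * exp (-c * y))) = 1 := by
  have hgauss : ∫ y in Iio c, y ^ 2 * (am * exp (-y ^ 2 / 2)) =
      am * ((∫ y in Iic c, exp (-y ^ 2 / 2)) - c * exp (-c ^ 2 / 2)) := by
    simp_rw [mul_left_comm _ am, integral_const_mul, ← integral_Iic_eq_integral_Iio,
      integral_Iic_sq_mul_exp_neg_sq_div_two]
  have hexp : c * ∫ y in Ici c, y * (ap * exp (-c * y)) =
      ap * (c * exp (-c * c) + ∫ y in Ioi c, exp (-c * y)) := by
    simp_rw [mul_left_comm _ ap, integral_const_mul, integral_Ici_eq_integral_Ioi,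
      mul_left_comm c ap, mul_integral_Ioi_mul_exp_neg_mul hc hc.le]
  have hsq : exp (-c * c) = exp (-c ^ 2) := by ring_nf
  rw [hgauss, hexp, hsq]
  linear_combination hnorm - c * hcont

theorem lyapunov_moment_bounds (ζ am ap : ℝ) (hζ : ζ < 0) (ham : 0 < am) (hap : 0 < ap)
    (hcont : am * Real.exp (-ζ ^ 2 / 2) = ap * Real.exp (-ζ ^ 2))
    (hnorm : am * (∫ y in Set.Iic (-ζ), Real.exp (-y ^ 2 / 2)) +
        ap * (∫ y in Set.Ioi (-ζ), Real.exp (-|ζ| * y)) = 1) :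
    (∫ y in Set.Iio (-ζ), y ^ 2 * (am * Real.exp (-y ^ 2 / 2))) +
        |ζ| * (∫ y in Set.Ici (-ζ), y * (ap * Real.exp (-|ζ| * y))) ≤ 1 ∧
      (∫ y in Set.Ici (-ζ), y * (ap * Real.exp (-|ζ| * y))) ≤ 1 / |ζ| ∧
      (∫ y in Set.Iio (-ζ), |y| * (am * Real.exp (-y ^ 2 / 2))) ≤ 1 := by
  obtain ⟨c, hc, rfl⟩ : ∃ c, 0 < c ∧ ζ = -c := ⟨-ζ, by linarith, by ring⟩
  simp only [neg_neg, abs_neg, abs_of_pos hc, neg_sq] at hcont hnorm ⊢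
  have hsum := gaussian_sq_moment_add_exp_moment_eq_one hc hcont hnorm
  have hgauss_nonneg : 0 ≤ ∫ y in Iio c, y ^ 2 * (am * exp (-y ^ 2 / 2)) :=
    setIntegral_nonneg measurableSet_Iio fun y _ => by positivity
  have hmoment_nonneg : 0 ≤ c * ∫ y in Ici c, y * (ap * exp (-c * y)) :=
    mul_nonneg hc.le <| setIntegral_nonneg measurableSet_Ici fun y hy =>
      mul_nonneg (hc.le.trans hy) (by positivity)
  have hmass_nonneg : 0 ≤ ap * ∫ y in Ioi c, exp (-c * y) :=
    mul_nonneg hap.le (setIntegral_nonneg measurableSet_Ioi fun y _ => by positivity)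
  refine ⟨hsum.le, ?_, ?_⟩
  · rw [le_div_iff₀ hc]
    linarith
  · calc (∫ y in Iio c, |y| * (am * exp (-y ^ 2 / 2)))
        ≤ ((∫ y in Iio c, y ^ 2 * (am * exp (-y ^ 2 / 2))) +
            ∫ y in Iio c, am * exp (-y ^ 2 / 2)) / 2 :=
          integral_abs_mul_le_half (.of_forall fun y => by positivity)
            (integrable_exp_neg_sq_div_two.const_mul am).integrableOn
            ((integrable_sq_mul_exp_neg_sq_div_two.const_mul am).integrableOn.congr_fun
              (fun y _ => mul_left_comm _ _ _) measurableSet_Iio)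
      _ ≤ 1 := by
        rw [integral_const_mul, ← integral_Iic_eq_integral_Iio (f := fun y => exp (-y ^ 2 / 2))]
        linarith
end

section
/- For every integer m ≥ 1, as ζ ↑ 0, |ζ|^m E[(Y^{(ζ)})^m] → m!, where Y^{(ζ)} has the density ν_ζ(x) = a₋ e^{-x²/2} for x ≤ -ζ and ν_ζ(x) = a₊ e^{-|ζ| x} for x ≥ -ζ, with the constants a₋, a₊ chosen so that ν_ζ is continuous and normalized. -/
open MeasureTheory Real Filter

/-- The normalizing constant `a₋` of the piecewise Gaussian/exponential density. -/
noncomputable def aMinus (ζ : ℝ) : ℝ :=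
  1 / ((∫ y in Set.Iic (-ζ), Real.exp (-y ^ 2 / 2)) +
      Real.exp (ζ ^ 2 / 2) * (∫ y in Set.Ioi (-ζ), Real.exp (-|ζ| * y)))

/-- The normalizing constant `a₊` of the piecewise Gaussian/exponential density. -/
noncomputable def aPlus (ζ : ℝ) : ℝ := Real.exp (ζ ^ 2 / 2) * aMinus ζ

section Aux

lemma Jzero (m : ℕ) : (∫ u in Set.Ioi (0:ℝ), u ^ m * Real.exp (-u)) = m.factorial := by
  have h : (∫ u in Set.Ioi (0:ℝ), u ^ m * Real.exp (-u))
      = ∫ u in Set.Ioi (0:ℝ), Real.exp (-u) * u ^ ((m : ℝ) + 1 - 1) := by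
    refine setIntegral_congr_fun measurableSet_Ioi (fun x hx => ?_)
    rw [add_sub_cancel_right, Real.rpow_natCast, mul_comm]
  rw [h, ← Real.Gamma_eq_integral (by positivity : (0:ℝ) < (m:ℝ) + 1)]
  exact_mod_cast Real.Gamma_nat_eq_factorial m

lemma auxSubst (m : ℕ) {t : ℝ} (ht : 0 < t) :
    t ^ (m+1) * (∫ y in Set.Ioi t, y ^ m * Real.exp (-(t*y)))
      = ∫ u in Set.Ioi (t^2), u ^ m * Real.exp (-u) := by
  have h := MeasureTheory.integral_comp_mul_left_Ioi
    (fun u => u ^ m * Real.exp (-u)) t ht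
  simp only [smul_eq_mul] at h
  rw [show t * t = t ^ 2 by ring] at h
  have h2 : ∀ y : ℝ, (t*y) ^ m * Real.exp (-(t*y)) = t ^ m * (y ^ m * Real.exp (-(t*y))) := by
    intro y; rw [mul_pow]; ring
  simp_rw [h2, MeasureTheory.integral_const_mul] at h
  calc t ^ (m+1) * (∫ y in Set.Ioi t, y ^ m * Real.exp (-(t*y)))
      = t * (t ^ m * ∫ y in Set.Ioi t, y ^ m * Real.exp (-(t*y))) := by ring
    _ = t * (t⁻¹ * ∫ u in Set.Ioi (t^2), u ^ m * Real.exp (-u)) := by rw [h]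
    _ = ∫ u in Set.Ioi (t^2), u ^ m * Real.exp (-u) := by field_simp

lemma auxExpint {t : ℝ} (ht : 0 < t) :
    (∫ y in Set.Ioi t, Real.exp (-(t*y))) = Real.exp (-t^2) / t := by
  have h := auxSubst 0 ht
  simp only [pow_one, pow_zero, one_mul] at h
  rw [integral_exp_neg_Ioi] at h
  field_simp at h ⊢
  rw [zero_add, pow_one] at h
  linarith [h]

lemma auxPowLeFactExp {x : ℝ} (hx : 0 ≤ x) (m : ℕ) : x ^ m ≤ m.factorial * Real.exp x := by
  have h1 : x ^ m / m.factorial ≤ Real.exp x := by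
    refine le_trans ?_ (Real.sum_le_exp_of_nonneg hx (m+1))
    exact Finset.single_le_sum (f := fun i => x ^ i / i.factorial)
      (fun i _ => by positivity) (Finset.self_mem_range_succ m)
  rw [div_le_iff₀ (by positivity)] at h1
  linarith [h1]

lemma auxIntegrableAbsPowGauss (m : ℕ) :
    Integrable (fun x : ℝ => |x| ^ m * Real.exp (-x^2/2)) := by
  have hdom := (integrable_exp_neg_mul_sq (by norm_num : (0:ℝ) < 1/4)).const_mul
    ((m.factorial : ℝ) * Real.exp 1)
  refine hdom.mono' ?_ (ae_of_all _ ?_)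
  · exact ((continuous_abs.pow m).mul (Continuous.rexp (by fun_prop))).aestronglyMeasurable
  · intro x
    have h0 : ‖|x| ^ m * Real.exp (-x^2/2)‖ = |x| ^ m * Real.exp (-x^2/2) := by
      rw [Real.norm_eq_abs, abs_of_nonneg (by positivity)]
    rw [h0]
    calc |x| ^ m * Real.exp (-x^2/2)
        ≤ ((m.factorial : ℝ) * Real.exp |x|) * Real.exp (-x^2/2) := by
          exact mul_le_mul_of_nonneg_right (auxPowLeFactExp (abs_nonneg x) m) (Real.exp_pos _).le
      _ ≤ ((m.factorial : ℝ) * Real.exp (x^2/4 + 1)) * Real.exp (-x^2/2) := by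
          have h2 : |x| ≤ x^2/4 + 1 := by nlinarith [sq_nonneg (|x| - 2), sq_abs x]
          exact mul_le_mul_of_nonneg_right (mul_le_mul_of_nonneg_left
            (Real.exp_le_exp.2 h2) (by positivity)) (Real.exp_pos _).le
      _ = (m.factorial : ℝ) * Real.exp 1 * Real.exp (-(1/4) * x^2) := by
          rw [mul_assoc, ← Real.exp_add, mul_assoc, ← Real.exp_add]
          ring_nf

lemma auxAbsSetIntegralIicLe {g f : ℝ → ℝ} (hg : Continuous g) (hf : Integrable f)
    (hbound : ∀ x, |g x| ≤ f x) (t : ℝ) :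
    |∫ y in Set.Iic t, g y| ≤ ∫ y, f y := by
  have hgi : Integrable g := hf.mono' hg.aestronglyMeasurable (ae_of_all _ hbound)
  calc |∫ y in Set.Iic t, g y| ≤ ∫ y in Set.Iic t, |g y| :=
        norm_integral_le_integral_norm g
    _ ≤ ∫ y in Set.Iic t, f y := by
        refine setIntegral_mono_on hgi.abs.integrableOn hf.integrableOn
          measurableSet_Iic (fun x _ => hbound x)
    _ ≤ ∫ y, f y := setIntegral_le_integral hf
        (ae_of_all _ (fun x => le_trans (abs_nonneg _) (hbound x)))

lemma auxJintOn (m : ℕ) : IntegrableOn (fun u : ℝ => u ^ m * Real.exp (-u)) (Set.Ioi 0) := by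
  have h := Real.GammaIntegral_convergent (by positivity : (0:ℝ) < (m:ℝ) + 1)
  refine h.congr_fun (fun x hx => ?_) measurableSet_Ioi
  rw [add_sub_cancel_right]
  beta_reduce
  rw [Real.rpow_natCast, mul_comm]

lemma auxJtendsto (m : ℕ) :
    Tendsto (fun t : ℝ => ∫ u in Set.Ioi (t^2), u ^ m * Real.exp (-u))
      (nhdsWithin 0 (Set.Ioi 0)) (nhds (m.factorial : ℝ)) := by
  have hsplit : ∀ t : ℝ, 0 < t →
      (∫ u in Set.Ioi (t^2), u ^ m * Real.exp (-u))
        = (m.factorial : ℝ) - ∫ u in Set.Ioc 0 (t^2), u ^ m * Real.exp (-u) := by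
    intro t ht
    have ht2 : (0:ℝ) < t^2 := by positivity
    have hu : Set.Ioc (0:ℝ) (t^2) ∪ Set.Ioi (t^2) = Set.Ioi 0 :=
      Set.Ioc_union_Ioi_eq_Ioi ht2.le
    have := MeasureTheory.setIntegral_union (f := fun u : ℝ => u ^ m * Real.exp (-u))
      (μ := volume) (Set.Ioc_disjoint_Ioi le_rfl) measurableSet_Ioi
      ((auxJintOn m).mono_set Set.Ioc_subset_Ioi_self)
      ((auxJintOn m).mono_set (Set.Ioi_subset_Ioi ht2.le))
    rw [hu, Jzero m] at this
    linarith [this]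
  have hbound : ∀ᶠ t in nhdsWithin (0:ℝ) (Set.Ioi 0),
      ‖(∫ u in Set.Ioc 0 (t^2), u ^ m * Real.exp (-u))‖ ≤ t^2 := by
    have h1 : ∀ᶠ t in nhdsWithin (0:ℝ) (Set.Ioi 0), t < 1 :=
      eventually_nhdsWithin_of_eventually_nhds (eventually_lt_nhds zero_lt_one)
    filter_upwards [self_mem_nhdsWithin, h1] with t ht htl
    have ht : (0:ℝ) < t := ht
    have ht21 : t^2 ≤ 1 := by nlinarith
    have hb := MeasureTheory.norm_setIntegral_le_of_norm_le_const
      (f := fun u : ℝ => u ^ m * Real.exp (-u)) (C := 1)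
      (s := Set.Ioc (0:ℝ) (t^2)) (measure_Ioc_lt_top (μ := volume)) ?_
    · calc ‖(∫ u in Set.Ioc 0 (t^2), u ^ m * Real.exp (-u))‖
          ≤ 1 * (volume (Set.Ioc (0:ℝ) (t^2))).toReal := hb
        _ = t^2 := by
            rw [Real.volume_Ioc, one_mul, ENNReal.toReal_ofReal (by nlinarith [sq_nonneg t])]
            ring
    · intro u hu
      have hu1 : 0 < u := hu.1
      have hu2 : u ≤ 1 := le_trans hu.2 ht21
      rw [Real.norm_eq_abs, abs_of_nonneg (by positivity)]
      calc u ^ m * Real.exp (-u) ≤ 1 * 1 := by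
            refine mul_le_mul (pow_le_one₀ hu1.le hu2) ?_ (Real.exp_pos _).le one_pos.le
            rw [show (1:ℝ) = Real.exp 0 by simp]
            exact Real.exp_le_exp.2 (by linarith)
        _ = 1 := by norm_num
  have hzero : Tendsto (fun t : ℝ => ∫ u in Set.Ioc 0 (t^2), u ^ m * Real.exp (-u))
      (nhdsWithin 0 (Set.Ioi 0)) (nhds 0) := by
    refine squeeze_zero_norm' hbound ?_
    have h2 : Tendsto (fun t : ℝ => t^2) (nhds (0:ℝ)) (nhds 0) := by
      simpa using (continuous_pow 2).tendsto (0:ℝ)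
    exact h2.mono_left nhdsWithin_le_nhds
  have hfin : Tendsto
      (fun t : ℝ => (m.factorial : ℝ) - ∫ u in Set.Ioc 0 (t^2), u ^ m * Real.exp (-u))
      (nhdsWithin 0 (Set.Ioi 0)) (nhds ((m.factorial : ℝ) - 0)) :=
    tendsto_const_nhds.sub hzero
  rw [sub_zero] at hfin
  refine hfin.congr' ?_
  filter_upwards [self_mem_nhdsWithin] with t ht
  exact (hsplit t ht).symm

end Aux

theorem moment_growth (m : ℕ) (hm : 1 ≤ m) :
    Tendsto (fun ζ : ℝ =>
        |ζ| ^ m * (aMinus ζ * (∫ y in Set.Iic (-ζ), y ^ m * Real.exp (-y ^ 2 / 2)) +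
          aPlus ζ * (∫ y in Set.Ioi (-ζ), y ^ m * Real.exp (-|ζ| * y))))
      (nhdsWithin 0 (Set.Iio 0)) (nhds (Nat.factorial m : ℝ)) := by
  set F : ℝ → ℝ := fun t =>
    (t ^ (m+1) * (∫ y in Set.Iic t, y ^ m * Real.exp (-y ^ 2 / 2))
      + Real.exp (t^2/2) * (∫ u in Set.Ioi (t^2), u ^ m * Real.exp (-u)))
    / (t * (∫ y in Set.Iic t, Real.exp (-y ^ 2 / 2)) + Real.exp (t^2/2) * Real.exp (-t^2))
    with hF
  -- limit of F along 𝓝[>] 0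
  have hFlim : Tendsto F (nhdsWithin 0 (Set.Ioi 0)) (nhds (m.factorial : ℝ)) := by
    have hC1 := auxIntegrableAbsPowGauss m
    have hC0 := auxIntegrableAbsPowGauss 0
    -- numerator part 1 tends to 0
    have hn1 : Tendsto (fun t : ℝ => t ^ (m+1) *
        (∫ y in Set.Iic t, y ^ m * Real.exp (-y ^ 2 / 2)))
        (nhdsWithin 0 (Set.Ioi 0)) (nhds 0) := by
      refine squeeze_zero_norm (a := fun t => |t| ^ (m+1) * ∫ y, |y| ^ m * Real.exp (-y^2/2)) ?_ ?_
      · intro t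
        have hb : |∫ y in Set.Iic t, y ^ m * Real.exp (-y ^ 2 / 2)|
            ≤ ∫ y, |y| ^ m * Real.exp (-y^2/2) := by
          refine auxAbsSetIntegralIicLe (by fun_prop) hC1 (fun x => ?_) t
          rw [abs_mul, abs_pow, abs_of_pos (Real.exp_pos _)]
        rw [Real.norm_eq_abs, abs_mul, abs_pow]
        exact mul_le_mul_of_nonneg_left hb (by positivity)
      · have hc : Tendsto (fun t : ℝ => |t| ^ (m+1) * ∫ y, |y| ^ m * Real.exp (-y^2/2))
            (nhds 0) (nhds (|(0:ℝ)| ^ (m+1) * ∫ y, |y| ^ m * Real.exp (-y^2/2))) :=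
          ((continuous_abs.pow (m+1)).mul continuous_const).tendsto 0
        simpa using hc.mono_left nhdsWithin_le_nhds
    -- numerator part 2 tends to m!
    have hexp : Tendsto (fun t : ℝ => Real.exp (t^2/2)) (nhdsWithin (0:ℝ) (Set.Ioi 0))
        (nhds 1) := by
      have hc : Continuous (fun t : ℝ => Real.exp (t^2/2)) := by fun_prop
      have := (hc.tendsto 0).mono_left (nhdsWithin_le_nhds (s := Set.Ioi (0:ℝ)))
      simpa using this
    have hn2 : Tendsto (fun t : ℝ => Real.exp (t^2/2) *
        (∫ u in Set.Ioi (t^2), u ^ m * Real.exp (-u)))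
        (nhdsWithin 0 (Set.Ioi 0)) (nhds (1 * (m.factorial : ℝ))) :=
      hexp.mul (auxJtendsto m)
    -- denominator tends to 1
    have hd1 : Tendsto (fun t : ℝ => t * (∫ y in Set.Iic t, Real.exp (-y ^ 2 / 2)))
        (nhdsWithin 0 (Set.Ioi 0)) (nhds 0) := by
      refine squeeze_zero_norm (a := fun t => |t| * ∫ y, |y| ^ 0 * Real.exp (-y^2/2)) ?_ ?_
      · intro t
        have hb : |∫ y in Set.Iic t, Real.exp (-y ^ 2 / 2)|
            ≤ ∫ y, |y| ^ 0 * Real.exp (-y^2/2) := by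
          refine auxAbsSetIntegralIicLe (by fun_prop) hC0 (fun x => ?_) t
          rw [pow_zero, one_mul, abs_of_pos (Real.exp_pos _)]
        rw [Real.norm_eq_abs, abs_mul]
        exact mul_le_mul_of_nonneg_left hb (abs_nonneg t)
      · have hc : Tendsto (fun t : ℝ => |t| * ∫ y, |y| ^ 0 * Real.exp (-y^2/2))
            (nhds 0) (nhds (|(0:ℝ)| * ∫ y, |y| ^ 0 * Real.exp (-y^2/2))) :=
          (continuous_abs.mul continuous_const).tendsto 0
        simpa using hc.mono_left nhdsWithin_le_nhds
    have hd2 : Tendsto (fun t : ℝ => Real.exp (t^2/2) * Real.exp (-t^2))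
        (nhdsWithin (0:ℝ) (Set.Ioi 0)) (nhds 1) := by
      have hc : Continuous (fun t : ℝ => Real.exp (t^2/2) * Real.exp (-t^2)) := by fun_prop
      have := (hc.tendsto 0).mono_left (nhdsWithin_le_nhds (s := Set.Ioi (0:ℝ)))
      simpa using this
    have hnum := hn1.add hn2
    have hden := hd1.add hd2
    rw [zero_add] at hden
    have hdiv := hnum.div hden (one_ne_zero)
    rw [hF]
    convert hdiv using 2
    all_goals norm_num
  -- transfer along ζ ↦ -ζ
  have hneg : Tendsto (fun ζ : ℝ => -ζ) (nhdsWithin (0:ℝ) (Set.Iio 0))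
      (nhdsWithin (0:ℝ) (Set.Ioi 0)) := by
    rw [tendsto_nhdsWithin_iff]
    constructor
    · have := (continuous_neg.tendsto (0:ℝ)).mono_left
        (nhdsWithin_le_nhds (s := Set.Iio (0:ℝ)))
      simpa using this
    · filter_upwards [self_mem_nhdsWithin] with ζ hζ
      exact Set.mem_Ioi.2 (neg_pos.2 hζ)
  have hcomp := hFlim.comp hneg
  refine hcomp.congr' ?_
  filter_upwards [self_mem_nhdsWithin] with ζ hζ
  have hζ0 : ζ < 0 := hζ
  have ht : (0:ℝ) < -ζ := neg_pos.2 hζ0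
  set t : ℝ := -ζ with htdef
  have habs : |ζ| = t := abs_of_neg hζ0
  have hζ2 : ζ ^ 2 = t ^ 2 := by rw [htdef]; ring
  -- rewrite the exponential integrals
  have hIexp : (∫ y in Set.Ioi t, Real.exp (-|ζ| * y)) = Real.exp (-t^2) / t := by
    rw [← auxExpint ht]
    refine setIntegral_congr_fun measurableSet_Ioi (fun x hx => ?_)
    rw [habs, neg_mul]
  have hI2 : (∫ y in Set.Ioi t, y ^ m * Real.exp (-|ζ| * y))
      = (∫ u in Set.Ioi (t^2), u ^ m * Real.exp (-u)) / t ^ (m+1) := by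
    rw [← auxSubst m ht]
    rw [eq_div_iff (by positivity)]
    rw [mul_comm (t ^ (m+1)) _]
    congr 1
    refine setIntegral_congr_fun measurableSet_Ioi (fun x hx => ?_)
    rw [habs, neg_mul]
  have haM : aMinus ζ = 1 / ((∫ y in Set.Iic t, Real.exp (-y ^ 2 / 2))
      + Real.exp (t^2/2) * (Real.exp (-t^2) / t)) := by
    rw [aMinus, hζ2, hIexp]
  have haP : aPlus ζ = Real.exp (t^2/2) * aMinus ζ := by
    rw [aPlus, hζ2]
  -- abbreviations
  set G : ℝ := ∫ y in Set.Iic t, Real.exp (-y ^ 2 / 2) with hG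
  set I1 : ℝ := ∫ y in Set.Iic t, y ^ m * Real.exp (-y ^ 2 / 2) with hI1
  set Jv : ℝ := ∫ u in Set.Ioi (t^2), u ^ m * Real.exp (-u) with hJv
  set A : ℝ := Real.exp (t^2/2) with hA
  set E : ℝ := Real.exp (-t^2) with hE
  have hGnn : 0 ≤ G := setIntegral_nonneg measurableSet_Iic
    (fun y _ => (Real.exp_pos _).le)
  have hApos : 0 < A := Real.exp_pos _
  have hEpos : 0 < E := Real.exp_pos _
  have hDpos : 0 < G + A * (E / t) := by
    have h2 : 0 < A * (E / t) := by positivity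
    linarith
  have hD2pos : 0 < t * G + A * E := by
    have h2 : 0 < A * E := by positivity
    nlinarith
  show F (-ζ) = |ζ| ^ m * (aMinus ζ * I1 + aPlus ζ * (∫ y in Set.Ioi (-ζ), y ^ m *
    Real.exp (-|ζ| * y)))
  rw [show -ζ = t from rfl, hF]
  simp only
  rw [hI2, haP, haM, habs, ← hG, ← hI1, ← hJv, ← hA, ← hE]
  field_simp
  ring
end

section
/- Consider the M/M/n queue (Erlang-C) birth-death chain with arrival rate λ and departure rate d(k) = μ(k ∧ n) in state k, with ρ = λ/(nμ) < 1, and let {ν_k} be its stationary distribution. If k* is the smallest index maximizing ν_k, then k* ≤ n and ν_{k*} ≤ (μ/λ) E[(X(∞) − n)⁻ 1{X(∞) ≤ n}], where X(∞) ∼ {ν_k}. -/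
open MeasureTheory Real

theorem erlangC_mode_bound (n : ℕ) (lam mu : ℝ) (ν : ℕ → ℝ) (kstar : ℕ)
    (hn : 1 ≤ n) (hlam : 0 < lam) (hmu : 0 < mu) (hrho : lam < n * mu)
    (hν : ∀ k, 0 ≤ ν k) (hsum : ∑' k, ν k = 1)
    (hbal : ∀ k : ℕ, lam * ν k = mu * (min (k + 1) n : ℕ) * ν (k + 1))
    (hmax : ∀ j, ν j ≤ ν kstar)
    (hleast : ∀ j, (∀ i, ν i ≤ ν j) → kstar ≤ j) :
    kstar ≤ n ∧
      ν kstar ≤ (mu / lam) * ∑ k ∈ Finset.range (n + 1), ((n : ℝ) - k) * ν k := by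
  have hpos : 0 < ν kstar := by
    by_contra h
    push_neg at h
    have hz : ∀ j, ν j = 0 := fun j => le_antisymm (le_trans (hmax j) h) (hν j)
    simp [hz] at hsum
  have hk : kstar ≤ n := by
    by_contra h
    push_neg at h
    obtain ⟨m, rfl⟩ : ∃ m, kstar = m + 1 := ⟨kstar - 1, by omega⟩
    have hmin : min (m + 1) n = n := by omega
    have hb := hbal m
    rw [hmin] at hb
    have h1 : lam * ν (m + 1) < mu * (n : ℝ) * ν (m + 1) := by
      apply mul_lt_mul_of_pos_right _ hpos
      nlinarith
    have h2 : lam * ν m ≤ lam * ν (m + 1) := mul_le_mul_of_nonneg_left (hmax m) hlam.le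
    linarith
  refine ⟨hk, ?_⟩
  -- key balance sum identity
  have key : ∀ m, m ≤ n → lam * ∑ k ∈ Finset.range m, ν k
      = mu * ∑ k ∈ Finset.range (m + 1), (k : ℝ) * ν k := by
    intro m
    induction m with
    | zero => intro _; simp
    | succ m ih =>
      intro hm
      have ih' := ih (by omega)
      have hb := hbal m
      have hmin : min (m + 1) n = m + 1 := by omega
      rw [hmin] at hb
      rw [Finset.sum_range_succ (f := ν), Finset.sum_range_succ (f := fun k => (k : ℝ) * ν k)]
      push_cast at hb ⊢
      linarith
  have hkey := key kstar hk
  have hA : (0 : ℝ) ≤ ∑ k ∈ Finset.range kstar, ν k :=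
    Finset.sum_nonneg fun k _ => hν k
  have hT : ∑ k ∈ Finset.range (kstar + 1), ((n : ℝ) - k) * ν k
      = (n : ℝ) * (∑ k ∈ Finset.range kstar, ν k + ν kstar)
        - ∑ k ∈ Finset.range (kstar + 1), (k : ℝ) * ν k := by
    rw [← Finset.sum_range_succ (f := ν), Finset.mul_sum, ← Finset.sum_sub_distrib]
    exact Finset.sum_congr rfl fun k _ => by ring
  have hmono : ∑ k ∈ Finset.range (kstar + 1), ((n : ℝ) - k) * ν k
      ≤ ∑ k ∈ Finset.range (n + 1), ((n : ℝ) - k) * ν k := by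
    apply Finset.sum_le_sum_of_subset_of_nonneg (Finset.range_subset_range.mpr (by omega))
    intro i hi _
    have : i ≤ n := by simpa [Nat.lt_succ_iff] using Finset.mem_range.mp hi
    have : (i : ℝ) ≤ n := by exact_mod_cast this
    have := hν i
    nlinarith
  have hmuT : mu * ∑ k ∈ Finset.range (kstar + 1), ((n : ℝ) - k) * ν k
      ≤ mu * ∑ k ∈ Finset.range (n + 1), ((n : ℝ) - k) * ν k :=
    mul_le_mul_of_nonneg_left hmono hmu.le
  have hexp : mu * ∑ k ∈ Finset.range (kstar + 1), ((n : ℝ) - k) * ν k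
      = mu * (n : ℝ) * (∑ k ∈ Finset.range kstar, ν k) + mu * (n : ℝ) * ν kstar
        - mu * ∑ k ∈ Finset.range (kstar + 1), (k : ℝ) * ν k := by
    rw [hT]; ring
  have f1 : 0 ≤ ((n : ℝ) * mu - lam) * ∑ k ∈ Finset.range kstar, ν k :=
    mul_nonneg (by linarith) hA
  have f2 : lam * ν kstar ≤ (n : ℝ) * mu * ν kstar :=
    mul_le_mul_of_nonneg_right hrho.le (hν kstar)
  rw [div_mul_eq_mul_div, le_div_iff₀ hlam]
  nlinarith [hkey, hexp, hmuT, f1, f2]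
end

section
/- Consider the M/M/n queue with 1 ≤ R = λ/μ < n, δ = 1/√R, ζ = δ(R − n) < 0, and scaled stationary count X̃(∞) = δ(X(∞) − R). Then E[ X̃(∞)² 1{X̃(∞) ≤ −ζ} ] ≤ 4/3 + 2δ²/3. -/
/-!
Apply the stationarity (generator) identity to `V(k) = (k - R)²`, but only on the states `k ≤ n`,
where the M/M/n chain serves at the linear rate `μ k`. Summing `ν k · (𝓛V)(k)` over `k ≤ n`
telescopes by detailed balance to the boundary flux `λ (2(n - R) + 1) ν n ≥ 0`, which gives
`2 E[(X - R)² ; X ≤ n] ≤ E[R + X ; X ≤ n]`. After scaling by `δ² = 1/R` the right side is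
`E[2 + δ X̃ ; X̃ ≤ -ζ] ≤ 2 + δ²/2 + E[X̃²/2 ; X̃ ≤ -ζ]`, so `(3/2) E[X̃² ; X̃ ≤ -ζ] ≤ 2 + δ²/2`.
-/

open Real Finset

/-- Birth rates `up`, death rates `down`; at `k = 0` the truncated `k - 1` makes the death term
vanish whatever `down 0` is. -/
def birthDeathGenerator (up down V : ℕ → ℝ) (k : ℕ) : ℝ :=
  up k * (V (k + 1) - V k) + down k * (V (k - 1) - V k)

/-- Detailed balance cancels the flux across every edge `k → k + 1` with `k < m`, leaving the
flux across `m → m + 1`. -/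
theorem sum_range_birthDeathGenerator_mul {up down V ν : ℕ → ℝ} {m : ℕ}
    (hbal : ∀ k < m, up k * ν k = down (k + 1) * ν (k + 1)) :
    ∑ k ∈ range (m + 1), birthDeathGenerator up down V k * ν k
      = up m * (V (m + 1) - V m) * ν m := by
  induction m with
  | zero => simp [birthDeathGenerator]
  | succ m ih =>
    have hflux : down (m + 1) * ν (m + 1) = up m * ν m := (hbal m m.lt_succ_self).symm
    rw [sum_range_succ, ih fun k hk => hbal k (hk.trans m.lt_succ_self)]
    simp only [birthDeathGenerator, Nat.add_sub_cancel]
    linear_combination (V m - V (m + 1)) * hflux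

theorem birthDeathGenerator_mmn_sq_of_le {lam mu R : ℝ} {n k : ℕ} (hR : lam = mu * R)
    (hk : k ≤ n) :
    birthDeathGenerator (fun _ => lam) (fun k => mu * (min k n : ℕ)) (fun k => ((k : ℝ) - R) ^ 2) k
      = mu * (R + k - 2 * ((k : ℝ) - R) ^ 2) := by
  rcases k with _ | k <;> simp only [birthDeathGenerator, min_eq_left hk, Nat.add_sub_cancel, hR] <;>
    push_cast <;> ring

theorem two_mul_sum_range_sq_le_of_mmn_balance {n : ℕ} {lam mu R : ℝ} {ν : ℕ → ℝ}
    (hlam : 0 ≤ lam) (hmu : 0 < mu) (hR : R = lam / mu) (hRn : R ≤ n) (hν : ∀ k, 0 ≤ ν k)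
    (hbal : ∀ k : ℕ, lam * ν k = mu * (min (k + 1) n : ℕ) * ν (k + 1)) :
    2 * ∑ k ∈ range (n + 1), ((k : ℝ) - R) ^ 2 * ν k ≤ ∑ k ∈ range (n + 1), (R + k) * ν k := by
  have hlamR : lam = mu * R := by rw [hR]; field_simp
  have hflux := sum_range_birthDeathGenerator_mul (up := fun _ => lam)
    (down := fun k => mu * (min k n : ℕ)) (V := fun k => ((k : ℝ) - R) ^ 2) fun k (_ : k < n) => hbal k
  rw [sum_congr rfl fun k hk => by
    rw [birthDeathGenerator_mmn_sq_of_le hlamR (Nat.lt_succ_iff.mp (mem_range.mp hk))]] at hflux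
  have hboundary : 0 ≤ lam * ((((n + 1 : ℕ) : ℝ) - R) ^ 2 - ((n : ℝ) - R) ^ 2) * ν n := by
    push_cast
    exact mul_nonneg (mul_nonneg hlam (by nlinarith)) (hν n)
  have hdrift : 0 ≤ ∑ k ∈ range (n + 1), (R + k - 2 * ((k : ℝ) - R) ^ 2) * ν k := by
    simp only [mul_assoc, ← mul_sum] at hflux hboundary
    exact nonneg_of_mul_nonneg_right (hflux ▸ hboundary) hmu
  simp only [sub_mul, sum_sub_distrib, mul_assoc, ← mul_sum] at hdrift
  linarith

theorem sum_sq_le_of_two_mul_sum_sq_le {ι : Type*} {s : Finset ι} {y ν : ι → ℝ} {R δ : ℝ}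
    (hν : ∀ i, 0 ≤ ν i) (hδR : δ ^ 2 * R = 1) (hmass : ∑ i ∈ s, ν i ≤ 1)
    (h2 : 2 * ∑ i ∈ s, (y i - R) ^ 2 * ν i ≤ ∑ i ∈ s, (R + y i) * ν i) :
    ∑ i ∈ s, (δ * (y i - R)) ^ 2 * ν i ≤ 4 / 3 + δ ^ 2 / 3 := by
  set T := ∑ i ∈ s, (δ * (y i - R)) ^ 2 * ν i
  have hT : T = δ ^ 2 * ∑ i ∈ s, (y i - R) ^ 2 * ν i := by
    simp only [T, mul_sum, mul_pow, mul_assoc]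
  -- `δ² (R + y) = 2 + δ · δ(y - R)` and `δ · x ≤ δ²/2 + x²/2`
  have hpoint : ∀ i ∈ s, δ ^ 2 * ((R + y i) * ν i)
      ≤ (2 + δ ^ 2 / 2) * ν i + (δ * (y i - R)) ^ 2 * ν i / 2 := fun i _ => by
    have hscale : δ ^ 2 * (R + y i) = 2 + δ * (δ * (y i - R)) := by linear_combination 2 * hδR
    nlinarith [hν i, mul_nonneg (hν i) (sq_nonneg (δ - δ * (y i - R)))]
  have hmoment : δ ^ 2 * ∑ i ∈ s, (R + y i) * ν i ≤ (2 + δ ^ 2 / 2) * ∑ i ∈ s, ν i + T / 2 := by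
    rw [mul_sum, mul_sum, sum_div, ← sum_add_distrib]
    exact sum_le_sum hpoint
  have h2T : 2 * T ≤ δ ^ 2 * ∑ i ∈ s, (R + y i) * ν i := by
    rw [hT, mul_left_comm]
    exact mul_le_mul_of_nonneg_left h2 (sq_nonneg δ)
  have hconst : (2 + δ ^ 2 / 2) * ∑ i ∈ s, ν i ≤ 2 + δ ^ 2 / 2 :=
    mul_le_of_le_one_right (by positivity) hmass
  linarith

theorem erlangC_second_moment_bound (n : ℕ) (lam mu R δ ζ : ℝ) (ν : ℕ → ℝ)
    (hlam : 0 < lam) (hmu : 0 < mu) (hR : R = lam / mu) (hR1 : 1 ≤ R) (hstable : R < n)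
    (hδ : δ = 1 / Real.sqrt R) (hζ : ζ = δ * (R - n))
    (hν : ∀ k, 0 ≤ ν k) (hsum : ∑' k, ν k = 1)
    (hbal : ∀ k : ℕ, lam * ν k = mu * (min (k + 1) n : ℕ) * ν (k + 1)) :
    (∑' k : ℕ, (if δ * ((k : ℝ) - R) ≤ -ζ then (δ * ((k : ℝ) - R)) ^ 2 else 0) * ν k)
      ≤ 4 / 3 + 2 * δ ^ 2 / 3 := by
  have hRpos : 0 < R := one_pos.trans_le hR1
  have hδpos : 0 < δ := by rw [hδ]; positivity
  have hδR : δ ^ 2 * R = 1 := by rw [hδ, div_pow, sq_sqrt hRpos.le]; field_simp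
  have hcut : ∀ k : ℕ, δ * ((k : ℝ) - R) ≤ -ζ ↔ k ∈ range (n + 1) := fun k => by
    rw [hζ, ← mul_neg, neg_sub, mul_le_mul_iff_right₀ hδpos, mem_range, Nat.lt_succ_iff,
      sub_le_sub_iff_right, Nat.cast_le]
  have htarget : (∑' k : ℕ, (if δ * ((k : ℝ) - R) ≤ -ζ then (δ * ((k : ℝ) - R)) ^ 2 else 0) * ν k)
      = ∑ k ∈ range (n + 1), (δ * ((k : ℝ) - R)) ^ 2 * ν k := by
    simp only [hcut, ite_mul, zero_mul]
    rw [tsum_eq_sum fun k hk => if_neg hk]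
    exact sum_congr rfl fun k hk => if_pos hk
  have hνsum : Summable ν := by
    by_contra h
    simp [tsum_eq_zero_of_not_summable h] at hsum
  have hmass : ∑ k ∈ range (n + 1), ν k ≤ 1 :=
    hsum ▸ hνsum.sum_le_tsum _ fun k _ => hν k
  rw [htarget]
  have := sum_sq_le_of_two_mul_sum_sq_le hν hδR hmass
    (two_mul_sum_range_sq_le_of_mmn_balance hlam.le hmu hR hstable.le hν hbal)
  linarith [sq_nonneg δ]
end

section
/- Consider the M/M/n queue with R = λ/μ < n, δ = 1/√R, ζ = δ(R − n) < 0, and scaled stationary count X̃(∞) = δ(X(∞) − R). Then P(X̃(∞) ≤ −ζ) ≤ (2 + δ)|ζ|. -/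
/-!
Write the balance equations as `min(k+1, n) ν (k+1) = R ν k`. Summing them shows that the mean
number of busy servers `∑ min(k, n) ν k` is `R`, so the mean number of idle servers
`∑ (n - k)⁺ ν k` is `n - R`. The states `k ≤ n` with at least `√R` idle servers therefore carry
mass at most `(n - R) / √R = |ζ|` by Markov's inequality. The remaining states `n - √R < k ≤ n`
are at most `√R + 1` in number, and each has mass at most `1 - R / n`, because the balance
equations force `ν (k + j) ≥ (R / n)^j ν k`. Finally `(√R + 1)(n - R) / n ≤ (1 + δ) |ζ|`.
-/

open Real Finset

lemma le_one_sub_mul_of_hasSum {ν : ℕ → ℝ} {m r : ℝ} (hν : ∀ k, 0 ≤ ν k) (hs : HasSum ν m)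
    (hr₀ : 0 ≤ r) (hr₁ : r < 1) (hstep : ∀ k, r * ν k ≤ ν (k + 1)) (k : ℕ) :
    ν k ≤ (1 - r) * m := by
  have hgrowth : ∀ j, r ^ j * ν k ≤ ν (k + j) := by
    intro j
    induction j with
    | zero => simp
    | succ j ih =>
      calc r ^ (j + 1) * ν k = r * (r ^ j * ν k) := by ring
        _ ≤ r * ν (k + j) := mul_le_mul_of_nonneg_left ih hr₀
        _ ≤ ν (k + j + 1) := hstep (k + j)
  have htail : (1 - r)⁻¹ * ν k ≤ m :=
    calc (1 - r)⁻¹ * ν k = ∑' j, r ^ j * ν k := by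
          rw [tsum_mul_right, tsum_geometric_of_lt_one hr₀ hr₁]
      _ ≤ ∑' j, ν (k + j) :=
          ((summable_geometric_of_lt_one hr₀ hr₁).mul_right _).tsum_le_tsum hgrowth
            ((summable_nat_add_iff k).mpr hs.summable |>.congr fun j => by rw [add_comm])
      _ ≤ ∑' i, ν i := tsum_comp_le_tsum_of_inj hs.summable hν (add_right_injective k)
      _ = m := hs.tsum_eq
  rwa [inv_mul_le_iff₀ (sub_pos.mpr hr₁)] at htail

lemma sum_le_div_of_hasSum {ν w : ℕ → ℝ} {a m : ℝ} (s : Finset ℕ) (ha : 0 < a)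
    (hν : ∀ k, 0 ≤ ν k) (hw : ∀ k, 0 ≤ w k) (has : ∀ k ∈ s, a ≤ w k)
    (hs : HasSum (fun k => w k * ν k) m) :
    ∑ k ∈ s, ν k ≤ m / a := by
  rw [le_div_iff₀ ha, sum_mul]
  calc ∑ k ∈ s, ν k * a ≤ ∑ k ∈ s, w k * ν k :=
        sum_le_sum fun k hk => by rw [mul_comm]; exact mul_le_mul_of_nonneg_right (has k hk) (hν k)
    _ ≤ m := sum_le_hasSum s (fun k _ => mul_nonneg (hw k) (hν k)) hs

lemma card_filter_sub_lt_le (n : ℕ) {x : ℝ} (hx : 0 ≤ x) :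
    (#{k ∈ range (n + 1) | ((n - k : ℕ) : ℝ) < x} : ℝ) ≤ x + 1 := by
  have hcard : #{k ∈ range (n + 1) | ((n - k : ℕ) : ℝ) < x} ≤ #(range ⌈x⌉₊) := by
    refine card_le_card_of_injOn (n - ·) (fun k hk => ?_) (fun a ha b hb hab => ?_)
    · have hk : ((n - k : ℕ) : ℝ) < x := (mem_filter.mp hk).2
      exact mem_range.mpr (Nat.cast_lt.mp (hk.trans_le (Nat.le_ceil x)))
    · have ha : a < n + 1 := mem_range.mp (mem_filter.mp ha).1
      have hb : b < n + 1 := mem_range.mp (mem_filter.mp hb).1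
      dsimp only at hab
      omega
  rw [card_range] at hcard
  exact (Nat.cast_le.mpr hcard).trans (Nat.ceil_lt_add_one hx).le

section BalanceEquations

variable {n : ℕ} {R m : ℝ} {ν : ℕ → ℝ}

lemma hasSum_min_mul (hs : HasSum ν m)
    (hbal : ∀ k, ((min (k + 1) n : ℕ) : ℝ) * ν (k + 1) = R * ν k) :
    HasSum (fun k => ((min k n : ℕ) : ℝ) * ν k) (R * m) := by
  simpa using (hasSum_nat_add_iff (f := fun k => ((min k n : ℕ) : ℝ) * ν k) 1).mp
    (by simpa only [hbal] using hs.mul_left R)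

lemma hasSum_sub_mul (hs : HasSum ν m)
    (hbal : ∀ k, ((min (k + 1) n : ℕ) : ℝ) * ν (k + 1) = R * ν k) :
    HasSum (fun k => ((n - k : ℕ) : ℝ) * ν k) ((n - R) * m) := by
  have hidle : ∀ k, n * ν k - ((min k n : ℕ) : ℝ) * ν k = ((n - k : ℕ) : ℝ) * ν k := by
    intro k
    rw [← sub_mul, ← Nat.cast_sub (min_le_right k n)]
    congr 2
    omega
  rw [sub_mul, ← funext hidle]
  exact (hs.mul_left (n : ℝ)).sub (hasSum_min_mul hs hbal)

lemma div_mul_le_of_balance (hn : 0 < n) (hν : ∀ k, 0 ≤ ν k)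
    (hbal : ∀ k, ((min (k + 1) n : ℕ) : ℝ) * ν (k + 1) = R * ν k) (k : ℕ) :
    R / n * ν k ≤ ν (k + 1) := by
  have hn' : (0 : ℝ) < n := Nat.cast_pos.mpr hn
  rw [div_mul_eq_mul_div, div_le_iff₀ hn', ← hbal, mul_comm (ν (k + 1))]
  exact mul_le_mul_of_nonneg_right (Nat.cast_le.mpr (min_le_right _ _)) (hν _)

lemma sum_range_succ_le_of_balance (hR₀ : 0 < R) (hRn : R < n) (hν : ∀ k, 0 ≤ ν k)
    (hs : HasSum ν 1) (hbal : ∀ k, ((min (k + 1) n : ℕ) : ℝ) * ν (k + 1) = R * ν k) :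
    ∑ k ∈ range (n + 1), ν k ≤ (n - R) / √R + (√R + 1) * (1 - R / n) := by
  have hn : 0 < n := Nat.cast_pos.mp (hR₀.trans hRn)
  have hsqrt : 0 < √R := sqrt_pos.mpr hR₀
  have hρ : R / n < 1 := (div_lt_one (by positivity)).mpr hRn
  rw [← sum_filter_add_sum_filter_not _ fun k => √R ≤ ((n - k : ℕ) : ℝ)]
  simp_rw [not_le]
  have hfar := sum_le_div_of_hasSum {k ∈ range (n + 1) | √R ≤ ((n - k : ℕ) : ℝ)} hsqrt hν
    (fun k => Nat.cast_nonneg _) (fun k hk => (mem_filter.mp hk).2) (hasSum_sub_mul hs hbal)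
  have hnear := sum_le_card_nsmul {k ∈ range (n + 1) | ((n - k : ℕ) : ℝ) < √R} ν _
    fun k _ =>
      le_one_sub_mul_of_hasSum hν hs (by positivity) hρ (div_mul_le_of_balance hn hν hbal) k
  rw [mul_one] at hfar hnear
  rw [nsmul_eq_mul] at hnear
  exact add_le_add hfar (hnear.trans (by gcongr; exact card_filter_sub_lt_le n hsqrt.le))

end BalanceEquations

theorem erlangC_idle_probability_bound (n : ℕ) (lam mu R δ ζ : ℝ) (ν : ℕ → ℝ)
    (hlam : 0 < lam) (hmu : 0 < mu) (hR : R = lam / mu) (hstable : R < n)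
    (hδ : δ = 1 / Real.sqrt R) (hζ : ζ = δ * (R - n))
    (hν : ∀ k, 0 ≤ ν k) (hsum : ∑' k, ν k = 1)
    (hbal : ∀ k : ℕ, lam * ν k = mu * (min (k + 1) n : ℕ) * ν (k + 1)) :
    (∑' k : ℕ, (if δ * ((k : ℝ) - R) ≤ -ζ then ν k else 0)) ≤ (2 + δ) * |ζ| := by
  have hR₀ : 0 < R := hR ▸ div_pos hlam hmu
  have hδ₀ : 0 < δ := hδ ▸ one_div_pos.mpr (sqrt_pos.mpr hR₀)
  have hs : HasSum ν 1 := hsum ▸ Summable.hasSum (by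
    by_contra h
    simp [tsum_eq_zero_of_not_summable h] at hsum)
  have hbal' : ∀ k, ((min (k + 1) n : ℕ) : ℝ) * ν (k + 1) = R * ν k := fun k => by
    rw [hR, div_mul_eq_mul_div, eq_div_iff hmu.ne', hbal k]
    ring
  have hevent : ∀ k : ℕ, δ * ((k : ℝ) - R) ≤ -ζ ↔ k ∈ range (n + 1) := fun k => by
    rw [hζ, ← mul_neg, neg_sub, mul_le_mul_iff_right₀ hδ₀, sub_le_sub_iff_right, mem_range,
      Nat.lt_succ_iff, Nat.cast_le]
  have hζ_abs : |ζ| = (n - R) / √R := by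
    rw [hζ, abs_of_neg (mul_neg_of_pos_of_neg hδ₀ (by linarith)), hδ]
    ring
  simp_rw [hevent]
  rw [tsum_eq_sum fun k hk => if_neg hk, sum_ite_mem, inter_self]
  calc _ ≤ (n - R) / √R + (√R + 1) * (1 - R / n) :=
        sum_range_succ_le_of_balance hR₀ hstable hν hs hbal'
    _ ≤ (n - R) / √R + (√R + 1) * ((n - R) / R) := by
        gcongr
        rw [one_sub_div (hR₀.trans hstable).ne']
        exact div_le_div_of_nonneg_left (by linarith) hR₀ hstable.le
    _ = (2 + δ) * |ζ| := by
        rw [hζ_abs, hδ]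
        field_simp
        linear_combination (n - R) * (√R + 1) * mul_self_sqrt hR₀.le
end
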